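/- Let f, f̃, g, g̃ be nonnegative integrable functions on ℝ² with ‖f‖₁, ‖f̃‖₁, ‖g‖₁, ‖g̃‖₁ ≤ K, and let ρ, ρ̃ : ℝ⁴ → [0,∞) be measurable with x₁⁺ρ ≤ M, x₁⁺ρ̃ ≤ M and x₁⁺|ρ - ρ̃| ≤ δ pointwise. Define B[f,g,ρ](x,y) = ∬∬ Γ_{σx²}(x-(x₁+x₂)/2)Γ_{σy²}(y-(y₁+y₂)/2) x₁⁺ρ(x₁,y₁,x₂,y₂) f(x₁,y₁)g(x₂,y₂) dx₁dy₁dx₂dy₂. Then ∬ |B[f,g,ρ] - B[f̃,g̃,ρ̃]| dx dy ≤ K² δ + M K (‖f-f̃‖₁ + ‖g-g̃‖₁). -/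

import Mathlib

/-! Both `B[f, g, ρ]` and `B[f̃, g̃, ρ̃]` are the Gaussian midpoint kernel applied to the birth
rates `x₁⁺ ρ(p, q) f(p) g(q)`. That kernel is a probability density in the offspring variable,
so it contracts `L¹`, and it remains to bound the `L¹` distance of the birth rates, which the
splitting `(ρ - ρ̃) f g + ρ̃ (f - f̃) g + ρ̃ f̃ (g - g̃)` does. -/

open MeasureTheory Real

/-- One-dimensional centered Gaussian density with variance `v`. -/
noncomputable def gauss (v z : ℝ) : ℝ :=
  (Real.sqrt (2 * Real.pi * v))⁻¹ * Real.exp (-z ^ 2 / (2 * v))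

/-- The reproduction (birth) operator with mating weight `ρ`. -/
noncomputable def B (σx σy : ℝ) (f g : ℝ × ℝ → ℝ) (ρ : ℝ × ℝ → ℝ × ℝ → ℝ)
    (x y : ℝ) : ℝ :=
  ∫ p : ℝ × ℝ, ∫ q : ℝ × ℝ,
    gauss (σx ^ 2) (x - (p.1 + q.1) / 2) * gauss (σy ^ 2) (y - (p.2 + q.2) / 2)
      * max p.1 0 * ρ p q * f p * g q

section MarkovKernel

variable {α β : Type*} [MeasurableSpace α] [MeasurableSpace β] {μ : Measure α} {ν : Measure β}
  [SFinite μ] [SFinite ν] {k : α → β → ℝ}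

lemma integrable_kernel_mul (hk : AEStronglyMeasurable (Function.uncurry k) (μ.prod ν))
    (hk0 : ∀ w z, 0 ≤ k w z) (hki : ∀ z, Integrable (k · z) μ) (hk1 : ∀ z, ∫ w, k w z ∂μ = 1)
    {h : β → ℝ} (hh : Integrable h ν) :
    Integrable (fun p : α × β => k p.1 p.2 * h p.2) (μ.prod ν) := by
  have hm : AEStronglyMeasurable (fun p : α × β => k p.1 p.2 * h p.2) (μ.prod ν) :=
    hk.mul (hh.aestronglyMeasurable.comp_quasiMeasurePreserving Measure.quasiMeasurePreserving_snd)
  refine (integrable_prod_iff' hm).mpr ⟨.of_forall fun z => (hki z).mul_const (h z), ?_⟩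
  have hnorm : ∀ z, ∫ w, ‖k w z * h z‖ ∂μ = ‖h z‖ := fun z => by
    simp_rw [norm_mul, Real.norm_of_nonneg (hk0 _ z)]
    rw [integral_mul_const, hk1, one_mul]
  simpa only [hnorm] using hh.norm

lemma integrable_integral_kernel_mul (hk : AEStronglyMeasurable (Function.uncurry k) (μ.prod ν))
    (hk0 : ∀ w z, 0 ≤ k w z) (hki : ∀ z, Integrable (k · z) μ) (hk1 : ∀ z, ∫ w, k w z ∂μ = 1)
    {h : β → ℝ} (hh : Integrable h ν) :
    Integrable (fun w => ∫ z, k w z * h z ∂ν) μ :=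
  (integrable_kernel_mul hk hk0 hki hk1 hh).integral_prod_left

lemma integral_abs_integral_kernel_mul_le
    (hk : AEStronglyMeasurable (Function.uncurry k) (μ.prod ν))
    (hk0 : ∀ w z, 0 ≤ k w z) (hki : ∀ z, Integrable (k · z) μ) (hk1 : ∀ z, ∫ w, k w z ∂μ = 1)
    {h : β → ℝ} (hh : Integrable h ν) :
    ∫ w, |∫ z, k w z * h z ∂ν| ∂μ ≤ ∫ z, |h z| ∂ν := by
  have habs : ∀ w z, |k w z * h z| = k w z * |h z| := fun w z => by
    rw [abs_mul, abs_of_nonneg (hk0 w z)]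
  calc ∫ w, |∫ z, k w z * h z ∂ν| ∂μ
      ≤ ∫ w, ∫ z, k w z * |h z| ∂ν ∂μ := by
        refine integral_mono_of_nonneg (.of_forall fun w => abs_nonneg _)
          (integrable_integral_kernel_mul hk hk0 hki hk1 hh.abs) (.of_forall fun w => ?_)
        simpa only [habs] using abs_integral_le_integral_abs (f := fun z => k w z * h z)
    _ = ∫ z, ∫ w, k w z * |h z| ∂μ ∂ν :=
        integral_integral_swap (integrable_kernel_mul hk hk0 hki hk1 hh.abs)
    _ = ∫ z, |h z| ∂ν := by simp only [integral_mul_const, hk1, one_mul]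

end MarkovKernel

lemma gauss_nonneg (v z : ℝ) : 0 ≤ gauss v z := by
  unfold gauss; positivity

lemma gauss_le_inv_sqrt {v : ℝ} (hv : 0 ≤ v) (z : ℝ) :
    gauss v z ≤ (Real.sqrt (2 * Real.pi * v))⁻¹ := by
  refine mul_le_of_le_one_right (by positivity) (Real.exp_le_one_iff.mpr ?_)
  exact div_nonpos_of_nonpos_of_nonneg (neg_nonpos.mpr (sq_nonneg z)) (by positivity)

@[fun_prop]
lemma continuous_gauss (v : ℝ) : Continuous (gauss v) := by
  unfold gauss; fun_prop

lemma gauss_sub_eq_gaussianPDFReal {v : ℝ} (hv : 0 ≤ v) (c : ℝ) :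
    (fun x => gauss v (x - c)) = ProbabilityTheory.gaussianPDFReal c ⟨v, hv⟩ :=
  rfl

lemma integrable_gauss_sub {v : ℝ} (hv : 0 ≤ v) (c : ℝ) :
    Integrable (fun x => gauss v (x - c)) := by
  rw [gauss_sub_eq_gaussianPDFReal hv c]
  exact ProbabilityTheory.integrable_gaussianPDFReal c _

lemma integral_gauss_sub {v : ℝ} (hv : 0 < v) (c : ℝ) :
    ∫ x, gauss v (x - c) = 1 := by
  rw [gauss_sub_eq_gaussianPDFReal hv.le c]
  exact ProbabilityTheory.integral_gaussianPDFReal_eq_one c (ne_of_gt hv)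

section MidpointKernel

noncomputable def midpointKernel (σx σy : ℝ) (w : ℝ × ℝ) (z : (ℝ × ℝ) × (ℝ × ℝ)) : ℝ :=
  gauss (σx ^ 2) (w.1 - (z.1.1 + z.2.1) / 2) * gauss (σy ^ 2) (w.2 - (z.1.2 + z.2.2) / 2)

variable (σx σy : ℝ)

lemma continuous_uncurry_midpointKernel : Continuous (Function.uncurry (midpointKernel σx σy)) := by
  unfold Function.uncurry midpointKernel; fun_prop

lemma midpointKernel_nonneg (w z) : 0 ≤ midpointKernel σx σy w z :=
  mul_nonneg (gauss_nonneg _ _) (gauss_nonneg _ _)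

lemma midpointKernel_le (w z) :
    midpointKernel σx σy w z
      ≤ (Real.sqrt (2 * Real.pi * σx ^ 2))⁻¹ * (Real.sqrt (2 * Real.pi * σy ^ 2))⁻¹ :=
  mul_le_mul (gauss_le_inv_sqrt (sq_nonneg σx) _) (gauss_le_inv_sqrt (sq_nonneg σy) _)
    (gauss_nonneg _ _) (by positivity)

lemma integrable_midpointKernel (z) : Integrable (midpointKernel σx σy · z) := by
  rw [Measure.volume_eq_prod]
  exact (integrable_gauss_sub (sq_nonneg σx) _).mul_prod (integrable_gauss_sub (sq_nonneg σy) _)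

variable {σx σy}

lemma integral_midpointKernel (hσx : σx ≠ 0) (hσy : σy ≠ 0) (z) :
    ∫ w, midpointKernel σx σy w z = 1 := by
  rw [Measure.volume_eq_prod]
  simp only [midpointKernel]
  rw [integral_prod_mul (fun t => gauss (σx ^ 2) (t - _)) (fun t => gauss (σy ^ 2) (t - _)),
    integral_gauss_sub (by positivity), integral_gauss_sub (by positivity), one_mul]

end MidpointKernel

section BirthRate

noncomputable def birthRate (f g : ℝ × ℝ → ℝ) (ρ : ℝ × ℝ → ℝ × ℝ → ℝ)
    (z : (ℝ × ℝ) × (ℝ × ℝ)) : ℝ :=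
  max z.1.1 0 * ρ z.1 z.2 * f z.1 * g z.2

variable {f g : ℝ × ℝ → ℝ} {ρ : ℝ × ℝ → ℝ × ℝ → ℝ}

lemma integrable_birthRate {M : ℝ} (hfi : Integrable f) (hgi : Integrable g)
    (hρm : Measurable (fun q : (ℝ × ℝ) × (ℝ × ℝ) => ρ q.1 q.2))
    (hρ0 : ∀ p q, 0 ≤ ρ p q) (hρM : ∀ p q, max p.1 0 * ρ p q ≤ M) :
    Integrable (birthRate f g ρ) := by
  have hm : AEStronglyMeasurable (birthRate f g ρ) :=
    (((continuous_fst.fst.max continuous_const).aestronglyMeasurable.mul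
      hρm.aestronglyMeasurable).mul
      (hfi.aestronglyMeasurable.comp_quasiMeasurePreserving Measure.quasiMeasurePreserving_fst)).mul
      (hgi.aestronglyMeasurable.comp_quasiMeasurePreserving Measure.quasiMeasurePreserving_snd)
  refine ((hfi.norm.mul_prod hgi.norm).const_mul M).mono' hm (.of_forall fun z => ?_)
  have hρz : 0 ≤ max z.1.1 0 * ρ z.1 z.2 := mul_nonneg (le_max_right _ _) (hρ0 _ _)
  have hsplit : birthRate f g ρ z = (max z.1.1 0 * ρ z.1 z.2) * (f z.1 * g z.2) := by
    rw [birthRate]; ring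
  rw [hsplit, norm_mul, Real.norm_of_nonneg hρz, norm_mul]
  exact mul_le_mul_of_nonneg_right (hρM _ _) (by positivity)

lemma integrable_midpointKernel_mul (σx σy : ℝ) {F : (ℝ × ℝ) × (ℝ × ℝ) → ℝ} (hF : Integrable F)
    (w : ℝ × ℝ) : Integrable (fun z => midpointKernel σx σy w z * F z) :=
  hF.bdd_mul
    ((continuous_uncurry_midpointKernel σx σy).comp (Continuous.prodMk_right w)).aestronglyMeasurable
    (.of_forall fun z => by
      rw [Real.norm_of_nonneg (midpointKernel_nonneg _ _ _ _)]
      exact midpointKernel_le _ _ _ _)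

lemma B_eq_integral_midpointKernel_mul (σx σy : ℝ) (hF : Integrable (birthRate f g ρ)) (x y : ℝ) :
    B σx σy f g ρ x y = ∫ z, midpointKernel σx σy (x, y) z * birthRate f g ρ z :=
  calc B σx σy f g ρ x y
      = ∫ p, ∫ q, midpointKernel σx σy (x, y) (p, q) * birthRate f g ρ (p, q) := by
        simp only [B, midpointKernel, birthRate, mul_assoc]
    _ = _ := integral_integral (integrable_midpointKernel_mul σx σy hF (x, y))

lemma abs_birthRate_sub_le {ftil gtil : ℝ × ℝ → ℝ} {ρtil : ℝ × ℝ → ℝ × ℝ → ℝ} {M δ : ℝ}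
    (hf0 : ∀ p, 0 ≤ f p) (hftil0 : ∀ p, 0 ≤ ftil p) (hg0 : ∀ p, 0 ≤ g p)
    (hρtil0 : ∀ p q, 0 ≤ ρtil p q) (hρtilM : ∀ p q, max p.1 0 * ρtil p q ≤ M)
    (hρδ : ∀ p q, max p.1 0 * |ρ p q - ρtil p q| ≤ δ) (z : (ℝ × ℝ) × (ℝ × ℝ)) :
    |birthRate f g ρ z - birthRate ftil gtil ρtil z|
      ≤ δ * (f z.1 * g z.2) + M * (|f z.1 - ftil z.1| * g z.2)
        + M * (ftil z.1 * |g z.2 - gtil z.2|) := by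
  obtain ⟨p, q⟩ := z
  have ha : 0 ≤ max p.1 0 := le_max_right _ _
  calc |birthRate f g ρ (p, q) - birthRate ftil gtil ρtil (p, q)|
      = |max p.1 0 * (ρ p q - ρtil p q) * (f p * g q)
          + max p.1 0 * ρtil p q * ((f p - ftil p) * g q)
          + max p.1 0 * ρtil p q * (ftil p * (g q - gtil q))| := by
        rw [birthRate, birthRate]; ring_nf
    _ ≤ |max p.1 0 * (ρ p q - ρtil p q) * (f p * g q)|
          + |max p.1 0 * ρtil p q * ((f p - ftil p) * g q)|
          + |max p.1 0 * ρtil p q * (ftil p * (g q - gtil q))| := abs_add_three _ _ _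
    _ = max p.1 0 * |ρ p q - ρtil p q| * (f p * g q)
          + max p.1 0 * ρtil p q * (|f p - ftil p| * g q)
          + max p.1 0 * ρtil p q * (ftil p * |g q - gtil q|) := by
        simp only [abs_mul, abs_of_nonneg ha, abs_of_nonneg (hρtil0 p q), abs_of_nonneg (hf0 p),
          abs_of_nonneg (hg0 q), abs_of_nonneg (hftil0 p)]
    _ ≤ _ := by
        have := hf0 p; have := hg0 q; have := hftil0 p
        gcongr
        exacts [hρδ p q, hρtilM p q, hρtilM p q]

lemma integral_abs_birthRate_sub_le {ftil gtil : ℝ × ℝ → ℝ} {ρtil : ℝ × ℝ → ℝ × ℝ → ℝ}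
    {K M δ : ℝ} (hK : 0 ≤ K) (hM : 0 ≤ M) (hδ : 0 ≤ δ)
    (hf0 : ∀ p, 0 ≤ f p) (hftil0 : ∀ p, 0 ≤ ftil p) (hg0 : ∀ p, 0 ≤ g p)
    (hfi : Integrable f) (hftili : Integrable ftil) (hgi : Integrable g) (hgtili : Integrable gtil)
    (hfK : ∫ p, f p ≤ K) (hftilK : ∫ p, ftil p ≤ K) (hgK : ∫ p, g p ≤ K)
    (hρtil0 : ∀ p q, 0 ≤ ρtil p q) (hρtilM : ∀ p q, max p.1 0 * ρtil p q ≤ M)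
    (hρδ : ∀ p q, max p.1 0 * |ρ p q - ρtil p q| ≤ δ) :
    ∫ z, |birthRate f g ρ z - birthRate ftil gtil ρtil z|
      ≤ K ^ 2 * δ + M * K * ((∫ p, |f p - ftil p|) + ∫ p, |g p - gtil p|) := by
  have hprod : ∀ u v : ℝ × ℝ → ℝ,
      ∫ z : (ℝ × ℝ) × (ℝ × ℝ), u z.1 * v z.2 = (∫ p, u p) * ∫ q, v q := fun u v => by
    rw [Measure.volume_eq_prod]; exact integral_prod_mul u v
  have h1 : Integrable fun z : (ℝ × ℝ) × (ℝ × ℝ) => δ * (f z.1 * g z.2) :=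
    (hfi.mul_prod hgi).const_mul δ
  have h2 : Integrable fun z : (ℝ × ℝ) × (ℝ × ℝ) => M * (|f z.1 - ftil z.1| * g z.2) :=
    ((hfi.sub hftili).abs.mul_prod hgi).const_mul M
  have h3 : Integrable fun z : (ℝ × ℝ) × (ℝ × ℝ) => M * (ftil z.1 * |g z.2 - gtil z.2|) :=
    (hftili.mul_prod (hgi.sub hgtili).abs).const_mul M
  have h12 : Integrable fun z : (ℝ × ℝ) × (ℝ × ℝ) =>
      δ * (f z.1 * g z.2) + M * (|f z.1 - ftil z.1| * g z.2) := h1.add h2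
  have hg : 0 ≤ ∫ q, g q := integral_nonneg hg0
  have hdf : 0 ≤ ∫ p, |f p - ftil p| := integral_nonneg fun _ => abs_nonneg _
  have hdg : 0 ≤ ∫ q, |g q - gtil q| := integral_nonneg fun _ => abs_nonneg _
  calc ∫ z, |birthRate f g ρ z - birthRate ftil gtil ρtil z|
      ≤ ∫ z : (ℝ × ℝ) × (ℝ × ℝ), δ * (f z.1 * g z.2) + M * (|f z.1 - ftil z.1| * g z.2)
          + M * (ftil z.1 * |g z.2 - gtil z.2|) :=
        integral_mono_of_nonneg (.of_forall fun _ => abs_nonneg _) (h12.add h3)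
          (.of_forall (abs_birthRate_sub_le hf0 hftil0 hg0 hρtil0 hρtilM hρδ))
    _ = δ * ((∫ p, f p) * ∫ q, g q) + M * ((∫ p, |f p - ftil p|) * ∫ q, g q)
          + M * ((∫ p, ftil p) * ∫ q, |g q - gtil q|) := by
        rw [integral_add h12 h3, integral_add h1 h2, integral_const_mul, integral_const_mul,
          integral_const_mul, hprod f g, hprod (fun p => |f p - ftil p|) g,
          hprod ftil (fun q => |g q - gtil q|)]
    _ ≤ δ * (K * K) + M * ((∫ p, |f p - ftil p|) * K) + M * (K * ∫ q, |g q - gtil q|) := by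
        gcongr
    _ = K ^ 2 * δ + M * K * ((∫ p, |f p - ftil p|) + ∫ p, |g p - gtil p|) := by ring

end BirthRate

theorem stmt_19_general (σx σy K M δ : ℝ) (hσx : 0 < σx) (hσy : 0 < σy)
    (hK : 0 ≤ K) (hM : 0 ≤ M) (hδ : 0 ≤ δ)
    (f ftil g gtil : ℝ × ℝ → ℝ)
    (hf0 : ∀ p, 0 ≤ f p) (hftil0 : ∀ p, 0 ≤ ftil p)
    (hg0 : ∀ p, 0 ≤ g p)
    (hfi : Integrable f) (hftili : Integrable ftil)
    (hgi : Integrable g) (hgtili : Integrable gtil)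
    (hfK : (∫ p : ℝ × ℝ, f p) ≤ K) (hftilK : (∫ p : ℝ × ℝ, ftil p) ≤ K)
    (hgK : (∫ p : ℝ × ℝ, g p) ≤ K)
    (ρ ρtil : ℝ × ℝ → ℝ × ℝ → ℝ)
    (hρm : Measurable (fun q : (ℝ × ℝ) × (ℝ × ℝ) => ρ q.1 q.2))
    (hρtilm : Measurable (fun q : (ℝ × ℝ) × (ℝ × ℝ) => ρtil q.1 q.2))
    (hρ0 : ∀ p q, 0 ≤ ρ p q) (hρtil0 : ∀ p q, 0 ≤ ρtil p q)
    (hρM : ∀ p q, max p.1 0 * ρ p q ≤ M)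
    (hρtilM : ∀ p q, max p.1 0 * ρtil p q ≤ M)
    (hρδ : ∀ p q, max p.1 0 * |ρ p q - ρtil p q| ≤ δ) :
    (∫ x : ℝ, ∫ y : ℝ, |B σx σy f g ρ x y - B σx σy ftil gtil ρtil x y|)
      ≤ K ^ 2 * δ + M * K * ((∫ p : ℝ × ℝ, |f p - ftil p|) + ∫ p : ℝ × ℝ, |g p - gtil p|) := by
  have hk : AEStronglyMeasurable (Function.uncurry (midpointKernel σx σy)) (volume.prod volume) :=
    (continuous_uncurry_midpointKernel σx σy).aestronglyMeasurable
  have hk1 := integral_midpointKernel hσx.ne' hσy.ne'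
  have hF := integrable_birthRate hfi hgi hρm hρ0 hρM
  have hFtil := integrable_birthRate hftili hgtili hρtilm hρtil0 hρtilM
  have hdiff : ∀ x y, B σx σy f g ρ x y - B σx σy ftil gtil ρtil x y
      = ∫ z, midpointKernel σx σy (x, y) z * (birthRate f g ρ z - birthRate ftil gtil ρtil z) :=
    fun x y => by
      rw [B_eq_integral_midpointKernel_mul σx σy hF, B_eq_integral_midpointKernel_mul σx σy hFtil,
        ← integral_sub (integrable_midpointKernel_mul σx σy hF _)
          (integrable_midpointKernel_mul σx σy hFtil _)]
      simp_rw [mul_sub]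
  calc (∫ x : ℝ, ∫ y : ℝ, |B σx σy f g ρ x y - B σx σy ftil gtil ρtil x y|)
      = ∫ w, |∫ z, midpointKernel σx σy w z * (birthRate f g ρ z - birthRate ftil gtil ρtil z)| := by
        simp_rw [hdiff]
        exact (integral_prod _ (integrable_integral_kernel_mul hk (midpointKernel_nonneg σx σy)
          (integrable_midpointKernel σx σy) hk1 (hF.sub hFtil)).abs).symm
    _ ≤ ∫ z, |birthRate f g ρ z - birthRate ftil gtil ρtil z| :=
        integral_abs_integral_kernel_mul_le hk (midpointKernel_nonneg σx σy)
          (integrable_midpointKernel σx σy) hk1 (hF.sub hFtil)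
    _ ≤ _ := integral_abs_birthRate_sub_le hK hM hδ hf0 hftil0 hg0 hfi hftili hgi hgtili hfK hftilK
        hgK hρtil0 hρtilM hρδ

theorem stmt_19 (σx σy K M δ : ℝ) (hσx : 0 < σx) (hσy : 0 < σy)
    (hK : 0 ≤ K) (hM : 0 ≤ M) (hδ : 0 ≤ δ)
    (f ftil g gtil : ℝ × ℝ → ℝ)
    (hf0 : ∀ p, 0 ≤ f p) (hftil0 : ∀ p, 0 ≤ ftil p)
    (hg0 : ∀ p, 0 ≤ g p) (hgtil0 : ∀ p, 0 ≤ gtil p)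
    (hfi : Integrable f) (hftili : Integrable ftil)
    (hgi : Integrable g) (hgtili : Integrable gtil)
    (hfK : (∫ p : ℝ × ℝ, f p) ≤ K) (hftilK : (∫ p : ℝ × ℝ, ftil p) ≤ K)
    (hgK : (∫ p : ℝ × ℝ, g p) ≤ K) (hgtilK : (∫ p : ℝ × ℝ, gtil p) ≤ K)
    (ρ ρtil : ℝ × ℝ → ℝ × ℝ → ℝ)
    (hρm : Measurable (fun q : (ℝ × ℝ) × (ℝ × ℝ) => ρ q.1 q.2))
    (hρtilm : Measurable (fun q : (ℝ × ℝ) × (ℝ × ℝ) => ρtil q.1 q.2))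
    (hρ0 : ∀ p q, 0 ≤ ρ p q) (hρtil0 : ∀ p q, 0 ≤ ρtil p q)
    (hρM : ∀ p q, max p.1 0 * ρ p q ≤ M)
    (hρtilM : ∀ p q, max p.1 0 * ρtil p q ≤ M)
    (hρδ : ∀ p q, max p.1 0 * |ρ p q - ρtil p q| ≤ δ) :
    (∫ x : ℝ, ∫ y : ℝ, |B σx σy f g ρ x y - B σx σy ftil gtil ρtil x y|)
      ≤ K ^ 2 * δ + M * K * ((∫ p : ℝ × ℝ, |f p - ftil p|) + ∫ p : ℝ × ℝ, |g p - gtil p|) :=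
  stmt_19_general σx σy K M δ hσx hσy hK hM hδ f ftil g gtil hf0 hftil0 hg0 hfi hftili hgi hgtili
    hfK hftilK hgK ρ ρtil hρm hρtilm hρ0 hρtil0 hρM hρtilM hρδ
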